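/- arXiv:1912.13369 — 3 statements merged into one kernel-verified Lean document; each statement's English description precedes it below -/
import Mathlib

section
/- Let H be a complex Hilbert space, C a conjugation on H, and N a bounded linear operator. Then N is C-normal if and only if ‖N(Ch)‖ = ‖N*h‖ for all h ∈ H. -/
/-!
Conjugating by `C` turns `N* N` into the linear operator `C N* N C`, and `C`-normality says it
equals `N N*`. On a complex space two operators agree as soon as their quadratic forms do, and
these quadratic forms are `x ↦ ‖N (C x)‖²` and `x ↦ ‖N* x‖²`, because `C` reverses inner products.
-/

open ContinuousLinearMap
open scoped ComplexConjugate

/-- A conjugation on a complex Hilbert space: an antilinear isometric involution. -/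
structure IsConjugation {H : Type*} [NormedAddCommGroup H] [InnerProductSpace ℂ H]
    (C : H → H) : Prop where
  map_add : ∀ x y : H, C (x + y) = C x + C y
  map_smul : ∀ (a : ℂ) (x : H), C (a • x) = (conj a) • C x
  involutive : ∀ x : H, C (C x) = x
  inner_eq : ∀ x y : H, (inner ℂ (C x) (C y) : ℂ) = inner ℂ y x

/-- `N` is `C`-normal: `C N N* = N* N C`. -/
def CNormal {H : Type*} [NormedAddCommGroup H] [InnerProductSpace ℂ H] [CompleteSpace H]
    (C : H → H) (N : H →L[ℂ] H) : Prop :=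
  ∀ x : H, C (N (adjoint N x)) = adjoint N (N (C x))

theorem inner_self_eq_inner_self_iff {𝕜 E : Type*} [RCLike 𝕜] [NormedAddCommGroup E]
    [InnerProductSpace 𝕜 E] (x y : E) : inner 𝕜 x x = inner 𝕜 y y ↔ ‖x‖ = ‖y‖ := by
  rw [inner_self_eq_norm_sq_to_K, inner_self_eq_norm_sq_to_K, ← RCLike.ofReal_pow,
    ← RCLike.ofReal_pow, RCLike.ofReal_inj, sq_eq_sq₀ (norm_nonneg x) (norm_nonneg y)]

namespace IsConjugation

variable {H : Type*} [NormedAddCommGroup H] [InnerProductSpace ℂ H] {C : H → H}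

def conjugate (hC : IsConjugation C) (T : H →ₗ[ℂ] H) : H →ₗ[ℂ] H where
  toFun x := C (T (C x))
  map_add' x y := by rw [hC.map_add, T.map_add, hC.map_add]
  map_smul' a x := by
    rw [hC.map_smul, T.map_smul, hC.map_smul, Complex.conj_conj, RingHom.id_apply]

theorem conjugate_apply (hC : IsConjugation C) (T : H →ₗ[ℂ] H) (x : H) :
    hC.conjugate T x = C (T (C x)) :=
  rfl

theorem inner_conjugate_apply_self (hC : IsConjugation C) (T : H →ₗ[ℂ] H) (x : H) :
    inner ℂ (hC.conjugate T x) x = inner ℂ (C x) (T (C x)) := by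
  simpa only [hC.conjugate_apply, hC.involutive] using hC.inner_eq (T (C x)) (C x)

end IsConjugation

theorem cNormal_iff_conjugate_eq {H : Type*} [NormedAddCommGroup H] [InnerProductSpace ℂ H]
    [CompleteSpace H] {C : H → H} (hC : IsConjugation C) (N : H →L[ℂ] H) :
    CNormal C N ↔
      hC.conjugate (adjoint N ∘L N : H →L[ℂ] H) = (N ∘L adjoint N : H →L[ℂ] H) := by
  have hCinj : Function.Injective C := Function.Involutive.injective hC.involutive
  rw [LinearMap.ext_iff]
  refine forall_congr' fun x => ?_
  rw [← hCinj.eq_iff, hC.involutive, hC.conjugate_apply, eq_comm]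
  rfl

theorem stmt3 {H : Type*} [NormedAddCommGroup H] [InnerProductSpace ℂ H] [CompleteSpace H]
    (C : H → H) (hC : IsConjugation C) (N : H →L[ℂ] H) :
    CNormal C N ↔ (∀ h : H, ‖N (C h)‖ = ‖adjoint N h‖) := by
  rw [cNormal_iff_conjugate_eq hC, ← ext_inner_map]
  refine forall_congr' fun x => ?_
  rw [hC.inner_conjugate_apply_self, ← inner_self_eq_inner_self_iff (𝕜 := ℂ)]
  simp only [coe_coe, comp_apply, adjoint_inner_right]
end

section
/- On C³ with conjugation C(z₁,z₂,z₃) = (conj z₃, conj z₂, conj z₁), the nilpotent operator N with matrix having 1 in the (1,2) entry and 0 elsewhere is not C-normal, yet both CNCN and NCNC are normal. Hence normality of N_L and N_R does not imply C-normality. -/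
open ContinuousLinearMap
open scoped ComplexConjugate

/-! `C` keeps the middle coordinate in place (conjugated), `N` reads only the middle
coordinate and never writes one, and `N*` writes only the middle coordinate from the first.
Hence `NCN = 0` and `N*CN* = 0`. Every side of the two normality identities contains one of
these sandwiches, so all of them vanish. C-normality fails on `e₁`: `CNN*e₁ = Ce₁ = e₃`,
while `N*NCe₁ = N*Ne₃ = 0`. -/

theorem adjoint_apply_of_apply_eq_ite {𝕜 ι : Type*} [RCLike 𝕜] [Fintype ι] [DecidableEq ι]
    (N : EuclideanSpace 𝕜 ι →L[𝕜] EuclideanSpace 𝕜 ι) {a b : ι}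
    (hN : ∀ z i, N z i = if i = a then z b else 0) (z : EuclideanSpace 𝕜 ι) (i : ι) :
    adjoint N z i = if i = b then z a else 0 := by
  calc adjoint N z i = inner 𝕜 (EuclideanSpace.single i (1 : 𝕜)) (adjoint N z) := by
        simp [EuclideanSpace.inner_single_left]
    _ = inner 𝕜 (N (EuclideanSpace.single i 1)) z := adjoint_inner_right N _ z
    _ = if i = b then z a else 0 := by
        by_cases hib : i = b <;> simp [PiLp.inner_apply, hN, hib, eq_comm]

/-- On `ℂ³` with the conjugation `C(z₁,z₂,z₃) = (conj z₃, conj z₂, conj z₁)`, the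
operator `N(z₁,z₂,z₃) = (z₂,0,0)` is not `C`-normal, yet `N_L = CNCN` and
`N_R = NCNC` are both normal. -/
theorem stmt8 (C : EuclideanSpace ℂ (Fin 3) → EuclideanSpace ℂ (Fin 3))
    (hCdef : ∀ (z : EuclideanSpace ℂ (Fin 3)) (i : Fin 3), C z i = conj (z (2 - i)))
    (N : EuclideanSpace ℂ (Fin 3) →L[ℂ] EuclideanSpace ℂ (Fin 3))
    (hNdef : ∀ (z : EuclideanSpace ℂ (Fin 3)) (i : Fin 3),
      N z i = if i = 0 then z 1 else 0) :
    ¬ (∀ x, C (N (adjoint N x)) = adjoint N (N (C x))) ∧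
    (∀ x, C (N (C (N (adjoint N (C (adjoint N (C x))))))) =
      adjoint N (C (adjoint N (C (C (N (C (N x)))))))) ∧
    (∀ x, N (C (N (C (C (adjoint N (C (adjoint N x))))))) =
      C (adjoint N (C (adjoint N (N (C (N (C x)))))))) := by
  have hNadj := adjoint_apply_of_apply_eq_ite N hNdef
  have hC0 : C 0 = 0 := by ext i; simp [hCdef]
  have hNCN : ∀ y, N (C (N y)) = 0 := by
    intro y; ext i; simp [hNdef, hCdef]
  have hNCN' : ∀ y, adjoint N (C (adjoint N y)) = 0 := by
    intro y; ext i; fin_cases i <;> simp [hNadj, hCdef]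
  refine ⟨fun hnormal => ?_, fun x => by simp [hNCN, hNCN', hC0],
    fun x => by simp [hNCN, hNCN', hC0]⟩
  have h := congrArg (· 2) (hnormal (EuclideanSpace.single 0 1))
  simp [hCdef, hNdef, hNadj] at h
end

section
/- On L²[0,1] with conjugation (Cf)(t) = conj(f(1−t)), the multiplication operator M_φ by φ ∈ L^∞[0,1] is C-normal if and only if |φ(t)|² = |φ(1−t)|² for almost every t ∈ [0,1]. -/
open MeasureTheory ContinuousLinearMap
open scoped ComplexConjugate

/-!
Both `M M*` and `M* M` are multiplication by `|φ|²`, while `C` turns multiplication by `ψ`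
into multiplication by `conj (ψ (1 - t))`. Hence `C M M* f = |φ(1-t)|² · C f` and
`M* M C f = |φ(t)|² · C f`; testing on `f = 1` gives one direction, and the other is immediate.
-/

namespace MeasureTheory

variable {α : Type*} [MeasurableSpace α] {μ : Measure α}

def IsMulOperator (M : Lp ℂ 2 μ →L[ℂ] Lp ℂ 2 μ) (φ : α → ℂ) : Prop :=
  ∀ f : Lp ℂ 2 μ, (M f : α → ℂ) =ᵐ[μ] fun t => φ t * f t

namespace IsMulOperator

variable {M N : Lp ℂ 2 μ →L[ℂ] Lp ℂ 2 μ} {φ ψ : α → ℂ}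

theorem comp (hM : IsMulOperator M φ) (hN : IsMulOperator N ψ) :
    IsMulOperator (M ∘L N) fun t => φ t * ψ t := fun f => by
  filter_upwards [hM (N f), hN f] with t hMt hNt
  rw [comp_apply, hMt, hNt, mul_assoc]

theorem adjoint (hM : IsMulOperator M φ) (hφ : MemLp φ ⊤ μ) :
    IsMulOperator (adjoint M) fun t => conj (φ t) := fun f => by
  have hconj : MemLp (fun t => conj (φ t)) ⊤ μ :=
    Complex.isometry_conj.lipschitz.comp_memLp (map_zero _) hφ
  have hmem : MemLp (fun t => conj (φ t) * f t) 2 μ := by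
    simpa only [Pi.smul_apply, smul_eq_mul] using (Lp.memLp f).mul' hconj
  suffices ContinuousLinearMap.adjoint M f = hmem.toLp _ from this ▸ hmem.coeFn_toLp
  refine ext_inner_right ℂ fun v => ?_
  rw [adjoint_inner_left, L2.inner_def, L2.inner_def]
  refine integral_congr_ae ?_
  filter_upwards [hM v, hmem.coeFn_toLp] with t hMv hconjf
  simp only [RCLike.inner_apply, hMv, hconjf, map_mul, Complex.conj_conj]
  ring

theorem comp_adjoint_self (hM : IsMulOperator M φ) (hφ : MemLp φ ⊤ μ) :
    IsMulOperator (M ∘L ContinuousLinearMap.adjoint M) fun t => (‖φ t‖ : ℂ) ^ 2 := by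
  simpa only [Complex.mul_conj'] using hM.comp (hM.adjoint hφ)

theorem adjoint_comp_self (hM : IsMulOperator M φ) (hφ : MemLp φ ⊤ μ) :
    IsMulOperator (ContinuousLinearMap.adjoint M ∘L M) fun t => (‖φ t‖ : ℂ) ^ 2 := by
  simpa only [Complex.conj_mul'] using (hM.adjoint hφ).comp hM

end IsMulOperator

variable {σ : α → α} {C : Lp ℂ 2 μ → Lp ℂ 2 μ}

theorem IsMulOperator.conj_comp_ae_eq (hσ : Measure.QuasiMeasurePreserving σ μ μ)
    (hC : ∀ f : Lp ℂ 2 μ, (C f : α → ℂ) =ᵐ[μ] fun t => conj (f (σ t)))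
    {M : Lp ℂ 2 μ →L[ℂ] Lp ℂ 2 μ} {φ : α → ℂ} (hM : IsMulOperator M φ) (f : Lp ℂ 2 μ) :
    (C (M f) : α → ℂ) =ᵐ[μ] fun t => conj (φ (σ t)) * C f t := by
  filter_upwards [hC (M f), hσ.ae_eq_comp (hM f), hC f] with t hCMf hMf hCf
  rw [hCMf, hCf, ← map_mul]
  exact congrArg conj hMf

theorem IsMulOperator.conj_normal_iff [IsFiniteMeasure μ]
    (hσ : Measure.QuasiMeasurePreserving σ μ μ)
    (hC : ∀ f : Lp ℂ 2 μ, (C f : α → ℂ) =ᵐ[μ] fun t => conj (f (σ t)))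
    {M : Lp ℂ 2 μ →L[ℂ] Lp ℂ 2 μ} {φ : α → ℂ} (hM : IsMulOperator M φ) (hφ : MemLp φ ⊤ μ) :
    (∀ f, C (M (ContinuousLinearMap.adjoint M f)) = ContinuousLinearMap.adjoint M (M (C f))) ↔
      ∀ᵐ t ∂μ, ‖φ t‖ ^ 2 = ‖φ (σ t)‖ ^ 2 := by
  have hL (f : Lp ℂ 2 μ) :
      (C (M (ContinuousLinearMap.adjoint M f)) : α → ℂ) =ᵐ[μ]
        fun t => (‖φ (σ t)‖ : ℂ) ^ 2 * C f t := by
    simpa only [comp_apply, map_pow, Complex.conj_ofReal] using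
      (hM.comp_adjoint_self hφ).conj_comp_ae_eq hσ hC f
  have hR (f : Lp ℂ 2 μ) :
      (ContinuousLinearMap.adjoint M (M (C f)) : α → ℂ) =ᵐ[μ]
        fun t => (‖φ t‖ : ℂ) ^ 2 * C f t :=
    hM.adjoint_comp_self hφ (C f)
  constructor
  · intro hnormal
    let one : Lp ℂ 2 μ := (memLp_const (1 : ℂ)).toLp _
    have hC_one : (C one : α → ℂ) =ᵐ[μ] fun _ => 1 := by
      filter_upwards [hC one, hσ.ae_eq_comp (memLp_const (1 : ℂ)).coeFn_toLp] with t hCt hone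
      exact hCt.trans ((congrArg conj hone).trans (map_one conj))
    filter_upwards [hL one, hR one, Lp.ext_iff.mp (hnormal one), hC_one] with t hLt hRt heq h1
    rw [hLt, hRt, h1, mul_one, mul_one] at heq
    exact_mod_cast heq.symm
  · intro hφσ f
    refine Lp.ext ((hL f).trans (Filter.EventuallyEq.trans ?_ (hR f).symm))
    filter_upwards [hφσ] with t ht
    rw [← Complex.ofReal_pow, ← Complex.ofReal_pow, ht]

end MeasureTheory

theorem measurePreserving_one_sub_restrict_Icc :
    MeasurePreserving (fun t : ℝ => 1 - t) (volume.restrict (Set.Icc 0 1))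
      (volume.restrict (Set.Icc 0 1)) := by
  have hpre : (fun t : ℝ => 1 - t) ⁻¹' Set.Icc 0 1 = Set.Icc 0 1 := by
    ext t
    simp only [Set.mem_preimage, Set.mem_Icc]
    constructor <;> rintro ⟨h₀, h₁⟩ <;> constructor <;> linarith
  simpa only [hpre] using
    (Measure.measurePreserving_sub_left volume (1 : ℝ)).restrict_preimage
      (measurableSet_Icc (a := (0 : ℝ)) (b := 1))

/-- On `L²[0,1]` with the conjugation `(Cf)(t) = conj (f (1 - t))`, the multiplication
operator `M_φ`, `φ ∈ L^∞`, is `C`-normal iff `|φ(t)|² = |φ(1-t)|²` a.e. -/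
theorem stmt17
    (C : Lp ℂ 2 ((volume : Measure ℝ).restrict (Set.Icc 0 1)) →
         Lp ℂ 2 ((volume : Measure ℝ).restrict (Set.Icc 0 1)))
    (hC : ∀ f : Lp ℂ 2 ((volume : Measure ℝ).restrict (Set.Icc 0 1)),
      (C f : ℝ → ℂ) =ᵐ[(volume : Measure ℝ).restrict (Set.Icc 0 1)]
        fun t => conj (f (1 - t)))
    (φ : ℝ → ℂ) (hφ : MemLp φ ⊤ ((volume : Measure ℝ).restrict (Set.Icc 0 1)))
    (M : Lp ℂ 2 ((volume : Measure ℝ).restrict (Set.Icc 0 1)) →L[ℂ]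
         Lp ℂ 2 ((volume : Measure ℝ).restrict (Set.Icc 0 1)))
    (hM : ∀ f : Lp ℂ 2 ((volume : Measure ℝ).restrict (Set.Icc 0 1)),
      (M f : ℝ → ℂ) =ᵐ[(volume : Measure ℝ).restrict (Set.Icc 0 1)]
        fun t => φ t * f t) :
    (∀ f, C (M (adjoint M f)) = adjoint M (M (C f))) ↔
      (∀ᵐ t ∂(volume : Measure ℝ).restrict (Set.Icc 0 1),
        ‖φ t‖ ^ 2 = ‖φ (1 - t)‖ ^ 2) :=
  IsMulOperator.conj_normal_iff measurePreserving_one_sub_restrict_Icc.quasiMeasurePreserving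
    hC hM hφ
end
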